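/- Fix an integer n ≥ 1 and α ∈ 𝒜ₙ. There exists a constant C > 0 such that for every integer N ≥ 1, | (N/π)^{(n−1)/2} · ∫_{𝕊ⁿ} |α·ω|^{2N} dΩ(ω) − 2π | ≤ C/N. Equivalently, the normalization constant a(N) defined by a(N)^{−2} = ∫_{𝕊ⁿ} |α·ω|^{2N} dΩ(ω) satisfies a(N)² = (N/π)^{(n−1)/2} [1/(2π) + O(N^{−1})] as N → ∞. -/

import Mathlib

open MeasureTheory

/-- The bilinear pairing `α·ω = Σ αⱼ ωⱼ` (no conjugation) of `α ∈ ℂ^{n+1}` with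
`ω ∈ ℝ^{n+1}`. -/
noncomputable def cdot {n : ℕ} (α : Fin (n + 1) → ℂ) (ω : EuclideanSpace ℝ (Fin (n + 1))) : ℂ :=
  ∑ j, α j * (ω j : ℂ)

/-- Membership in `𝒜ₙ = {α ∈ ℂ^{n+1} : |Re α| = |Im α| = 1, Re α · Im α = 0}`. -/
def memA {n : ℕ} (α : Fin (n + 1) → ℂ) : Prop :=
  (∑ j, (α j).re ^ 2) = 1 ∧ (∑ j, (α j).im ^ 2) = 1 ∧ (∑ j, (α j).re * (α j).im) = 0

/-!
Both sides are read off the Gaussian integral `G = ∫_{ℝ^{n+1}} |α·x|^{2N} e^{-|x|²} dx`.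
Since `x ↦ |α·x|^{2N}` is homogeneous of degree `2N`, polar coordinates give
`G = I · Γ(N + (n+1)/2) / 2`, where `I` is the integral over the sphere. On the other hand
`|α·x|² = ⟨Re α, x⟩² + ⟨Im α, x⟩²` is the squared norm of the orthogonal projection of `x` onto
the plane spanned by the orthonormal pair `Re α, Im α`, so the Gaussian factors along that plane
and its orthogonal complement: `G = π^{(n+1)/2} N!`. With `s = (n-1)/2` this gives
`(N/π)^s I = 2π N^s Γ(N+1) / Γ(N+1+s)`, and log-convexity of `Γ` squeezes
`log Γ(N+1+s) - log Γ(N+1)` between `s log N` and `s log (N+1+s)`, which puts the ratio within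
`s(1+s)/N` of `1`.
-/

open Real Set Metric Submodule
open scoped RealInnerProductSpace

namespace Real

theorem sub_log_Gamma_le_mul_log {x s : ℝ} (hx : 0 < x) (hs : 0 ≤ s) :
    log (Gamma (x + s)) - log (Gamma x) ≤ s * log (x + s) := by
  rcases hs.eq_or_lt with rfl | hs
  · simp
  have hxs : 0 < x + s := by linarith
  have h := convexOn_log_Gamma.slope_mono_adjacent (x := x) (y := x + s) (z := x + s + 1)
    hx (mem_Ioi.2 (by linarith)) (by linarith) (by linarith)
  have hstep : log (Gamma (x + s + 1)) = log (x + s) + log (Gamma (x + s)) := by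
    rw [Gamma_add_one hxs.ne', log_mul hxs.ne' (Gamma_pos_of_pos hxs).ne']
  simp only [Function.comp_apply, add_sub_cancel_left, div_one, hstep,
    div_le_iff₀ hs] at h
  linarith

theorem mul_log_le_sub_log_Gamma {x s : ℝ} (hx : 1 < x) (hs : 0 ≤ s) :
    s * log (x - 1) ≤ log (Gamma (x + s)) - log (Gamma x) := by
  rcases hs.eq_or_lt with rfl | hs
  · simp
  have hx₁ : 0 < x - 1 := by linarith
  have h := convexOn_log_Gamma.slope_mono_adjacent (x := x - 1) (y := x) (z := x + s)
    hx₁ (mem_Ioi.2 (by linarith)) (by linarith) (by linarith)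
  have hstep : log (Gamma x) = log (x - 1) + log (Gamma (x - 1)) := by
    rw [← log_mul hx₁.ne' (Gamma_pos_of_pos hx₁).ne', ← Gamma_add_one hx₁.ne', sub_add_cancel]
  simp only [Function.comp_apply, sub_sub_cancel, div_one, add_sub_cancel_left, hstep,
    le_div_iff₀ hs] at h
  linarith

theorem abs_rpow_mul_Gamma_div_Gamma_sub_one_le {x s : ℝ} (hx : 0 < x) (hs : 0 ≤ s) :
    |x ^ s * Gamma (x + 1) / Gamma (x + 1 + s) - 1| ≤ s * (1 + s) / x := by
  set t := log (Gamma (x + 1 + s)) - log (Gamma (x + 1)) - s * log x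
  have ht₀ : 0 ≤ t := by
    have := mul_log_le_sub_log_Gamma (x := x + 1) (by linarith) hs
    rw [add_sub_cancel_right] at this
    linarith
  have ht : t ≤ s * (1 + s) / x := by
    have hlog : log (x + 1 + s) - log x ≤ (1 + s) / x := by
      rw [← log_div (by linarith) hx.ne']
      calc log ((x + 1 + s) / x) ≤ (x + 1 + s) / x - 1 := log_le_sub_one_of_pos (by positivity)
        _ = (1 + s) / x := by field_simp; ring
    have := sub_log_Gamma_le_mul_log (x := x + 1) (by linarith) hs
    calc t ≤ s * (log (x + 1 + s) - log x) := by linarith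
      _ ≤ s * ((1 + s) / x) := mul_le_mul_of_nonneg_left hlog hs
      _ = s * (1 + s) / x := by ring
  have hq : x ^ s * Gamma (x + 1) / Gamma (x + 1 + s) = exp (-t) := by
    rw [rpow_def_of_pos hx, neg_sub, exp_sub, exp_sub, exp_log (Gamma_pos_of_pos (by linarith)),
      exp_log (Gamma_pos_of_pos (by linarith)), mul_comm (log x)]
    field_simp
  rw [hq, abs_sub_comm, abs_of_nonneg (by simpa using ht₀)]
  linarith [add_one_le_exp (-t)]

end Real

section Polar

variable {E : Type*} [NormedAddCommGroup E] [NormedSpace ℝ E] [FiniteDimensional ℝ E]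
  [Nontrivial E] [MeasurableSpace E] [BorelSpace E] (μ : Measure E) [μ.IsAddHaarMeasure]

theorem MeasureTheory.integral_comp_inv_norm_smul_mul (g : E → ℝ) (h : ℝ → ℝ) :
    ∫ x, g (‖x‖⁻¹ • x) * h ‖x‖ ∂μ =
      (∫ ω : sphere (0 : E) 1, g ω ∂μ.toSphere) *
        ∫ r in Ioi (0 : ℝ), r ^ (Module.finrank ℝ E - 1) * h r := by
  calc ∫ x, g (‖x‖⁻¹ • x) * h ‖x‖ ∂μ
      = ∫ x : ({0}ᶜ : Set E), g (‖x.1‖⁻¹ • x.1) * h ‖x.1‖ ∂(μ.comap (↑)) := by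
        rw [integral_subtype_comap (measurableSet_singleton _).compl
          fun x ↦ g (‖x‖⁻¹ • x) * h ‖x‖, restrict_compl_singleton]
    _ = ∫ p, g p.1 * h p.2 ∂μ.toSphere.prod (.volumeIoiPow (Module.finrank ℝ E - 1)) := by
        simpa using μ.measurePreserving_homeomorphUnitSphereProd.integral_comp
          (Homeomorph.measurableEmbedding _) fun p ↦ g p.1 * h p.2
    _ = (∫ ω, g ω ∂μ.toSphere) * ∫ r, h r ∂.volumeIoiPow (Module.finrank ℝ E - 1) :=
        integral_prod_mul (fun ω : sphere (0 : E) 1 ↦ g ω) fun r : Ioi (0 : ℝ) ↦ h r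
    _ = _ := by
        simp only [Measure.volumeIoiPow, ENNReal.ofReal]
        rw [integral_withDensity_eq_integral_smul
            (measurable_subtype_coe.pow_const _).real_toNNReal,
          integral_subtype_comap measurableSet_Ioi
            fun r ↦ Real.toNNReal (r ^ (Module.finrank ℝ E - 1)) • h r]
        congr 1
        refine setIntegral_congr_fun measurableSet_Ioi fun r hr ↦ ?_
        rw [NNReal.smul_def, Real.coe_toNNReal _ (pow_nonneg hr.out.le _), smul_eq_mul]

theorem integral_Ioi_pow_mul_exp_neg_sq (m : ℕ) :
    ∫ r in Ioi (0 : ℝ), r ^ m * exp (-r ^ 2) = Gamma ((m + 1) / 2) / 2 := by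
  have h := integral_rpow_mul_exp_neg_rpow (p := 2) (q := m) two_pos
    (by linarith [m.cast_nonneg (α := ℝ)])
  rw [one_div_mul_eq_div] at h
  rw [← h]
  refine setIntegral_congr_fun measurableSet_Ioi fun r _ ↦ ?_
  norm_cast

theorem MeasureTheory.integral_mul_exp_neg_sq_norm_of_homogeneous (f : E → ℝ)
    (k : ℕ) (hf : ∀ r : ℝ, 0 < r → ∀ x, f (r • x) = r ^ k * f x) :
    ∫ x, f x * exp (-‖x‖ ^ 2) ∂μ =
      (∫ ω : sphere (0 : E) 1, f ω ∂μ.toSphere) *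
        (Gamma ((k + Module.finrank ℝ E) / 2) / 2) := by
  have hpolar : ∀ x ≠ (0 : E), f x * exp (-‖x‖ ^ 2) =
      f (‖x‖⁻¹ • x) * (‖x‖ ^ k * exp (-‖x‖ ^ 2)) := fun x hx ↦ by
    rw [← mul_assoc, mul_comm _ (‖x‖ ^ k), ← hf _ (norm_pos_iff.2 hx),
      smul_inv_smul₀ (norm_ne_zero_iff.2 hx)]
  rw [integral_congr_ae ((Measure.ae_ne μ 0).mono hpolar),
    integral_comp_inv_norm_smul_mul μ f fun r ↦ r ^ k * exp (-r ^ 2)]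
  congr 1
  have hd : 0 < Module.finrank ℝ E := Module.finrank_pos
  simp_rw [← mul_assoc, ← pow_add]
  rw [integral_Ioi_pow_mul_exp_neg_sq]
  congr 3
  push_cast [Nat.cast_pred hd]
  ring

end Polar

section InnerProductSpace

variable {V : Type*} [NormedAddCommGroup V] [InnerProductSpace ℝ V] [FiniteDimensional ℝ V]
  {ι : Type*} [Fintype ι] {w : ι → V}

theorem Orthonormal.norm_orthogonalProjectionOnto_span_sq (hw : Orthonormal ℝ w) (x : V) :
    ‖(span ℝ (range w)).orthogonalProjectionOnto x‖ ^ 2 = ∑ i, ⟪w i, x⟫ ^ 2 := by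
  let b := (Module.Basis.span hw.linearIndependent).toOrthonormalBasis <| by
    rw [funext (Module.Basis.span_apply hw.linearIndependent)]
    exact orthonormal_span hw
  rw [← b.sum_sq_inner_right]
  refine Finset.sum_congr rfl fun i _ ↦ ?_
  rw [inner_orthogonalProjectionOnto_eq_of_mem_left, Module.Basis.coe_toOrthonormalBasis,
    Module.Basis.span_apply]

variable [MeasurableSpace V] [BorelSpace V]

theorem integral_norm_pow_mul_exp_neg_sq_norm [Nontrivial V] (k : ℕ) :
    ∫ x : V, ‖x‖ ^ k * exp (-‖x‖ ^ 2) =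
      π ^ (Module.finrank ℝ V / 2 : ℝ) * Gamma ((k + Module.finrank ℝ V) / 2) /
        Gamma (Module.finrank ℝ V / 2) := by
  have hmoment := integral_mul_exp_neg_sq_norm_of_homogeneous volume (fun x : V ↦ ‖x‖ ^ k) k
    fun r hr x ↦ by rw [norm_smul, mul_pow, Real.norm_of_nonneg hr.le]
  have hmass := integral_mul_exp_neg_sq_norm_of_homogeneous volume (fun _ : V ↦ (1 : ℝ)) 0
    fun _ _ _ ↦ by rw [pow_zero, one_mul]
  have hgauss : ∫ x : V, exp (-‖x‖ ^ 2) = π ^ (Module.finrank ℝ V / 2 : ℝ) := by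
    simpa using GaussianFourier.integral_rexp_neg_mul_sq_norm (V := V) one_pos
  simp only [one_mul, CharP.cast_eq_zero, zero_add, hgauss] at hmass
  simp only [norm_eq_of_mem_sphere, one_pow] at hmoment
  have hΓ : 0 < Gamma (Module.finrank ℝ V / 2) :=
    Gamma_pos_of_pos (by have := Module.finrank_pos (R := ℝ) (M := V); positivity)
  rw [hmoment, hmass]
  field_simp

theorem integral_comp_orthogonalProjectionOnto_mul_exp_neg_sq_norm (K : Submodule ℝ V)
    (g : K → ℝ) :
    ∫ x : V, g (K.orthogonalProjectionOnto x) * exp (-‖x‖ ^ 2) =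
      (∫ y : K, g y * exp (-‖y‖ ^ 2)) * π ^ (Module.finrank ℝ Kᗮ / 2 : ℝ) := by
  let e := K.orthogonalDecomposition.symm
  rw [← e.measurePreserving.integral_comp e.toHomeomorph.measurableEmbedding,
    ← (WithLp.volume_preserving_toLp K Kᗮ).integral_comp
      (MeasurableEquiv.toLp 2 (K × Kᗮ)).measurableEmbedding]
  have hsplit : ∀ p : K × Kᗮ, g (K.orthogonalProjectionOnto (e (WithLp.toLp 2 p))) *
      exp (-‖e (WithLp.toLp 2 p)‖ ^ 2) = g p.1 * exp (-‖p.1‖ ^ 2) * exp (-‖p.2‖ ^ 2) := by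
    rintro ⟨y, z⟩
    rw [LinearIsometryEquiv.norm_map, WithLp.prod_norm_sq_eq_of_L2, neg_add, exp_add,
      ← fst_orthogonalDecomposition_apply, LinearIsometryEquiv.apply_symm_apply, mul_assoc]
    rfl
  simp_rw [hsplit]
  rw [Measure.volume_eq_prod,
    integral_prod_mul (fun y : K ↦ g y * exp (-‖y‖ ^ 2)) fun z : Kᗮ ↦ exp (-‖z‖ ^ 2)]
  congr 1
  simpa using GaussianFourier.integral_rexp_neg_mul_sq_norm (V := Kᗮ) one_pos

theorem Orthonormal.integral_sum_inner_sq_pow_mul_exp_neg_sq_norm [Nonempty ι]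
    (hw : Orthonormal ℝ w) (N : ℕ) :
    ∫ x : V, (∑ i, ⟪w i, x⟫ ^ 2) ^ N * exp (-‖x‖ ^ 2) =
      π ^ (Module.finrank ℝ V / 2 : ℝ) * Gamma (N + Fintype.card ι / 2) /
        Gamma (Fintype.card ι / 2) := by
  set K := span ℝ (range w)
  have hK : Module.finrank ℝ K = Fintype.card ι := finrank_span_eq_card hw.linearIndependent
  have : Nontrivial K := Module.nontrivial_of_finrank_pos (hK ▸ Fintype.card_pos)
  have hdim : (Module.finrank ℝ V : ℝ) = Module.finrank ℝ K + Module.finrank ℝ Kᗮ := by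
    exact_mod_cast K.finrank_add_finrank_orthogonal.symm
  simp_rw [← hw.norm_orthogonalProjectionOnto_span_sq, ← pow_mul]
  rw [integral_comp_orthogonalProjectionOnto_mul_exp_neg_sq_norm K fun y ↦ ‖y‖ ^ (2 * N),
    integral_norm_pow_mul_exp_neg_sq_norm, hdim, add_div (Module.finrank ℝ K : ℝ),
    rpow_add pi_pos, hK]
  push_cast
  ring_nf

end InnerProductSpace

section Pairing

variable {n : ℕ}

def reVec (α : Fin (n + 1) → ℂ) : EuclideanSpace ℝ (Fin (n + 1)) :=
  WithLp.toLp 2 fun j ↦ (α j).re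

def imVec (α : Fin (n + 1) → ℂ) : EuclideanSpace ℝ (Fin (n + 1)) :=
  WithLp.toLp 2 fun j ↦ (α j).im

theorem cdot_eq_inner_add_inner_mul_I (α : Fin (n + 1) → ℂ)
    (x : EuclideanSpace ℝ (Fin (n + 1))) :
    cdot α x = ⟪reVec α, x⟫ + ⟪imVec α, x⟫ * Complex.I := by
  apply Complex.ext <;>
    simp [cdot, reVec, imVec, PiLp.inner_apply, Complex.re_sum, Complex.im_sum, mul_comm]

theorem norm_cdot_sq (α : Fin (n + 1) → ℂ) (x : EuclideanSpace ℝ (Fin (n + 1))) :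
    ‖cdot α x‖ ^ 2 = ∑ i, ⟪![reVec α, imVec α] i, x⟫ ^ 2 := by
  rw [cdot_eq_inner_add_inner_mul_I, Complex.sq_norm, Complex.normSq_add_mul_I, Fin.sum_univ_two]
  rfl

theorem cdot_smul (α : Fin (n + 1) → ℂ) (r : ℝ) (x : EuclideanSpace ℝ (Fin (n + 1))) :
    cdot α (r • x) = r * cdot α x := by
  simp [cdot, Finset.mul_sum, mul_left_comm]

theorem memA.orthonormal {α : Fin (n + 1) → ℂ} (hα : memA α) :
    Orthonormal ℝ ![reVec α, imVec α] := by
  obtain ⟨hre, him, hreim⟩ := hα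
  rw [orthonormal_iff_ite]
  intro i j
  fin_cases i <;> fin_cases j <;>
    simp [reVec, imVec, EuclideanSpace.norm_eq, PiLp.inner_apply, hre, him, hreim, mul_comm]

end Pairing

theorem integral_sphere_norm_cdot_pow {n : ℕ} {α : Fin (n + 1) → ℂ} (hα : memA α) (N : ℕ) :
    ∫ ω : sphere (0 : EuclideanSpace ℝ (Fin (n + 1))) 1, ‖cdot α ω‖ ^ (2 * N)
        ∂(volume : Measure (EuclideanSpace ℝ (Fin (n + 1)))).toSphere =
      2 * π ^ ((n + 1) / 2 : ℝ) * Gamma (N + 1) / Gamma (N + (n + 1) / 2) := by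
  have hpolar := integral_mul_exp_neg_sq_norm_of_homogeneous volume
    (fun x ↦ ‖cdot α x‖ ^ (2 * N)) (2 * N) fun r hr x ↦ by
      rw [cdot_smul, norm_mul, Complex.norm_real, norm_of_nonneg hr.le, mul_pow]
  have hgauss := hα.orthonormal.integral_sum_inner_sq_pow_mul_exp_neg_sq_norm N
  simp_rw [← norm_cdot_sq, ← pow_mul] at hgauss
  rw [hgauss, finrank_euclideanSpace_fin, Fintype.card_fin] at hpolar
  have hΓ : 0 < Gamma (N + (n + 1) / 2) := Gamma_pos_of_pos (by positivity)
  rw [eq_div_iff hΓ.ne']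
  push_cast at hpolar
  norm_num [Gamma_one] at hpolar
  rw [show (2 * N + (n + 1)) / 2 = (N + (n + 1) / 2 : ℝ) by ring] at hpolar
  linarith

/-- there is `C > 0` with
`|(N/π)^{(n−1)/2} ∫_{𝕊ⁿ} |α·ω|^{2N} dΩ − 2π| ≤ C/N` for all `N ≥ 1`;
i.e. `a(N)² = (N/π)^{(n−1)/2}[1/(2π) + O(N⁻¹)]`. -/
theorem stmt9 (n : ℕ) (hn : 1 ≤ n) (α : Fin (n + 1) → ℂ) (hα : memA α) :
    ∃ C > 0, ∀ N : ℕ, 1 ≤ N →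
      |((N : ℝ) / Real.pi) ^ (((n : ℝ) - 1) / 2) *
          (∫ ω : Metric.sphere (0 : EuclideanSpace ℝ (Fin (n + 1))) 1,
            ‖cdot α (ω : EuclideanSpace ℝ (Fin (n + 1)))‖ ^ (2 * N)
            ∂((volume : Measure (EuclideanSpace ℝ (Fin (n + 1)))).toSphere))
        - 2 * Real.pi| ≤ C / N := by
  set s : ℝ := ((n : ℝ) - 1) / 2
  have hs : 0 ≤ s := div_nonneg (sub_nonneg.2 (by exact_mod_cast hn)) zero_le_two
  refine ⟨2 * π * (1 + s) ^ 2, by positivity, fun N hN ↦ ?_⟩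
  have hN₀ : (0 : ℝ) < N := by exact_mod_cast hN
  have hratio : ((N : ℝ) / π) ^ s * (2 * π ^ ((n + 1) / 2 : ℝ) * Gamma (N + 1) /
      Gamma (N + (n + 1) / 2)) - 2 * π =
      2 * π * (N ^ s * Gamma (N + 1) / Gamma (N + 1 + s) - 1) := by
    rw [show ((n + 1) / 2 : ℝ) = 1 + s by ring, show (N + (1 + s) : ℝ) = N + 1 + s by ring,
      div_rpow hN₀.le pi_pos.le, rpow_add pi_pos, rpow_one]
    have hπs := (rpow_pos_of_pos pi_pos s).ne'
    field_simp
  rw [integral_sphere_norm_cdot_pow hα, hratio, abs_mul, abs_of_pos (by positivity)]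
  calc 2 * π * |N ^ s * Gamma (N + 1) / Gamma (N + 1 + s) - 1|
      ≤ 2 * π * (s * (1 + s) / N) :=
        mul_le_mul_of_nonneg_left (abs_rpow_mul_Gamma_div_Gamma_sub_one_le hN₀ hs) (by positivity)
    _ ≤ 2 * π * (1 + s) ^ 2 / N := by
        rw [mul_div_assoc (2 * π)]
        gcongr
        nlinarith
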